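/- arXiv:1207.3292 — 6 statements merged into one kernel-verified Lean document; each statement's English description precedes it below -/
import Mathlib

section
/- For all real numbers a, λ̄, P1A, P1C, P2 with 0 < λ̄, 0 ≤ P1A, 0 ≤ P1C, 0 ≤ P2, and 0 < a ≤ 1, we have (1/2)·log(1 + P1A/λ̄) + (1/2)·log(1 + (a²·P1C/λ̄)/(1 + a²·P1A/λ̄ + P2/λ̄)) ≤ (1/2)·log(1 + P1A/λ̄ + P1C/λ̄). -/
/-!
Combining the two logarithms, the claim is `(1 + A) (1 + s C / (1 + s A + Q)) ≤ 1 + A + C`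
with `A = P1A/λ̄`, `C = P1C/λ̄`, `Q = P2/λ̄`, `s = a²`. Expanding the product, this says
`s (1 + A) C ≤ (1 + s A + Q) C`, which holds as soon as `s ≤ 1 + Q`, in particular for `a² ≤ 1`.
-/

open Real

lemma one_add_mul_one_add_div_le {s A C Q : ℝ} (hs : 0 ≤ s) (hA : 0 ≤ A) (hC : 0 ≤ C)
    (hsQ : s ≤ 1 + Q) :
    (1 + A) * (1 + s * C / (1 + s * A + Q)) ≤ 1 + A + C := by
  have hsD : s * (1 + A) ≤ 1 + s * A + Q := by linarith
  have hfrac : (1 + A) * (s * C) / (1 + s * A + Q) ≤ C :=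
    div_le_of_le_mul₀ (by nlinarith) hC (by nlinarith)
  calc (1 + A) * (1 + s * C / (1 + s * A + Q))
      = 1 + A + (1 + A) * (s * C) / (1 + s * A + Q) := by ring
    _ ≤ 1 + A + C := by linarith

lemma log_one_add_add_log_one_add_div_le {s A C Q : ℝ} (hs : 0 ≤ s) (hA : 0 ≤ A) (hC : 0 ≤ C)
    (hsQ : s ≤ 1 + Q) :
    log (1 + A) + log (1 + s * C / (1 + s * A + Q)) ≤ log (1 + A + C) := by
  have hD : 0 ≤ 1 + s * A + Q := by nlinarith
  have hfrac : 0 < 1 + s * C / (1 + s * A + Q) :=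
    add_pos_of_pos_of_nonneg one_pos (div_nonneg (mul_nonneg hs hC) hD)
  rw [← log_mul (by positivity) hfrac.ne']
  exact log_le_log (by positivity) (one_add_mul_one_add_div_le hs hA hC hsQ)

theorem stmt_0 (a lb P1A P1C P2 : ℝ) (hlb : 0 < lb) (hA : 0 ≤ P1A)
    (hC : 0 ≤ P1C) (h2 : 0 ≤ P2) (ha : 0 < a) (ha1 : a ≤ 1) :
    (1/2) * Real.log (1 + P1A/lb) +
      (1/2) * Real.log (1 + (a^2 * P1C/lb) / (1 + a^2 * P1A/lb + P2/lb)) ≤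
    (1/2) * Real.log (1 + P1A/lb + P1C/lb) := by
  have hs : a ^ 2 ≤ 1 + P2 / lb := by
    nlinarith [pow_le_one₀ (n := 2) ha.le ha1, div_nonneg h2 hlb.le]
  have key := log_one_add_add_log_one_add_div_le (sq_nonneg a) (div_nonneg hA hlb.le)
    (div_nonneg hC hlb.le) hs
  simp only [mul_div_assoc] at key ⊢
  linarith
end

section
/- For all real numbers a, b, λ̄, P1A, P1C, P2 with 0 < λ̄, 0 ≤ P1A, 0 ≤ P1C, 0 ≤ P2, 0 < a ≤ 1, b ≥ 1, and a·b ≥ 1, we have (1/2)·log(1 + P1A/λ̄) + (1/2)·log(1 + (a²·P1C/λ̄)/(1 + a²·P1A/λ̄ + P2/λ̄)) + (1/2)·log(1 + (P2/λ̄)/(1 + a²·P1A/λ̄)) ≤ (1/2)·log(1 + P1A/λ̄ + P1C/λ̄ + b²·P2/λ̄). -/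
/-!
Write `x, y, z` for the received SNRs `P1A/λ̄, P1C/λ̄, P2/λ̄` and `s = a²`, `t = b²`. The two
successive-decoding factors telescope,
`(1 + s y / (1 + s x + z)) (1 + z / (1 + s x)) = (1 + s x + s y + z) / (1 + s x)`,
so the claim reduces to the polynomial inequality
`(1 + x) (1 + s x + s y + z) ≤ (1 + s x) (1 + x + y + t z)`, whose slack is
`(1 - s) y + (1 - s) t z + (s t - 1) (1 + x) z ≥ 0`.
-/

open Real

theorem one_add_mul_le_one_add_mul_of_le_one {s t x y z : ℝ} (hy : 0 ≤ y) (hz : 0 ≤ z)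
    (hs : s ≤ 1) (ht : 0 ≤ t) (hst : 1 ≤ s * t) (hx : 0 ≤ 1 + x) :
    (1 + x) * (1 + s * x + s * y + z) ≤ (1 + s * x) * (1 + x + y + t * z) := by
  have slack : 0 ≤ (1 - s) * y + (1 - s) * t * z + (s * t - 1) * (1 + x) * z := by
    have h₁ : 0 ≤ 1 - s := by linarith
    have h₂ : 0 ≤ s * t - 1 := by linarith
    positivity
  linarith

theorem successive_decoding_product_le {s t x y z : ℝ} (hx : 0 ≤ x) (hy : 0 ≤ y) (hz : 0 ≤ z)
    (hs₀ : 0 ≤ s) (hs : s ≤ 1) (ht : 0 ≤ t) (hst : 1 ≤ s * t) :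
    (1 + x) * (1 + s * y / (1 + s * x + z)) * (1 + z / (1 + s * x)) ≤ 1 + x + y + t * z := by
  have hD : 0 < 1 + s * x := by positivity
  have hD' : 0 < 1 + s * x + z := by positivity
  have telescope : (1 + x) * (1 + s * y / (1 + s * x + z)) * (1 + z / (1 + s * x))
      = (1 + x) * (1 + s * x + s * y + z) / (1 + s * x) := by
    field_simp
    ring
  rw [telescope, div_le_iff₀ hD, mul_comm _ (1 + s * x)]
  exact one_add_mul_le_one_add_mul_of_le_one hy hz hs ht hst (by linarith)

theorem stmt_6_general (a b lb P1A P1C P2 : ℝ) (hlb : 0 < lb) (hA : 0 ≤ P1A)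
    (hC : 0 ≤ P1C) (h2 : 0 ≤ P2) (ha : 0 < a) (ha1 : a ≤ 1)
    (hab : 1 ≤ a * b) :
    (1/2) * Real.log (1 + P1A/lb) +
      (1/2) * Real.log (1 + (a^2 * P1C/lb) / (1 + a^2 * P1A/lb + P2/lb)) +
      (1/2) * Real.log (1 + (P2/lb) / (1 + a^2 * P1A/lb)) ≤
    (1/2) * Real.log (1 + P1A/lb + P1C/lb + b^2 * P2/lb) := by
  rw [mul_div_assoc (a^2) P1C, mul_div_assoc (a^2) P1A, mul_div_assoc (b^2) P2]
  set x := P1A / lb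
  set y := P1C / lb
  set z := P2 / lb
  have hx : 0 ≤ x := by positivity
  have hy : 0 ≤ y := by positivity
  have hz : 0 ≤ z := by positivity
  have hst : 1 ≤ a^2 * b^2 := by rw [← mul_pow]; exact one_le_pow₀ hab
  have key := successive_decoding_product_le hx hy hz (sq_nonneg a) (pow_le_one₀ ha.le ha1)
    (sq_nonneg b) hst
  calc _ = (1/2) * log ((1 + x) * (1 + a^2 * y / (1 + a^2 * x + z)) * (1 + z / (1 + a^2 * x))) := by
        rw [log_mul (by positivity) (by positivity), log_mul (by positivity) (by positivity)]
        ring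
    _ ≤ _ := by gcongr

theorem stmt_6 (a b lb P1A P1C P2 : ℝ) (hlb : 0 < lb) (hA : 0 ≤ P1A)
    (hC : 0 ≤ P1C) (h2 : 0 ≤ P2) (ha : 0 < a) (ha1 : a ≤ 1) (hb : 1 ≤ b)
    (hab : 1 ≤ a * b) :
    (1/2) * Real.log (1 + P1A/lb) +
      (1/2) * Real.log (1 + (a^2 * P1C/lb) / (1 + a^2 * P1A/lb + P2/lb)) +
      (1/2) * Real.log (1 + (P2/lb) / (1 + a^2 * P1A/lb)) ≤
    (1/2) * Real.log (1 + P1A/lb + P1C/lb + b^2 * P2/lb) :=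
  stmt_6_general a b lb P1A P1C P2 hlb hA hC h2 ha ha1 hab
end

section
/- For all real numbers a, b, λ̄, P1A, P2 with 0 < λ̄, 0 ≤ P1A, 0 ≤ P2, 0 < a ≤ 1, b ≥ 1, and a·b ≥ 1, we have (1/2)·log(1 + P1A/λ̄) + (1/2)·log(1 + (P2/λ̄)/(1 + a²·P1A/λ̄)) ≤ (1/2)·log(1 + P1A/λ̄ + b²·P2/λ̄). -/
theorem one_add_mul_one_add_div_one_add_mul_le {x y s t : ℝ} (hx : 0 ≤ x) (hy : 0 ≤ y)
    (hs : 1 ≤ s) (hts : 1 ≤ t * s) :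
    (1 + x) * (1 + y / (1 + t * x)) ≤ 1 + x + s * y := by
  have ht : 0 < t := pos_of_mul_pos_left (by linarith) (by linarith : (0 : ℝ) ≤ s)
  have hden : 0 < 1 + t * x := by positivity
  have hgain : 1 + x ≤ s * (1 + t * x) := by nlinarith
  calc (1 + x) * (1 + y / (1 + t * x)) = 1 + x + y * ((1 + x) / (1 + t * x)) := by
        field_simp
    _ ≤ 1 + x + y * s := by
        gcongr
        exact (div_le_iff₀ hden).mpr hgain
    _ = 1 + x + s * y := by ring

theorem stmt_7_general (a b lb P1A P2 : ℝ) (hlb : 0 < lb) (hA : 0 ≤ P1A)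
    (h2 : 0 ≤ P2) (hb : 1 ≤ b) (hab : 1 ≤ a * b) :
    (1/2) * Real.log (1 + P1A/lb) +
      (1/2) * Real.log (1 + (P2/lb) / (1 + a^2 * P1A/lb)) ≤
    (1/2) * Real.log (1 + P1A/lb + b^2 * P2/lb) := by
  have hx : 0 ≤ P1A / lb := div_nonneg hA hlb.le
  have hy : 0 ≤ P2 / lb := div_nonneg h2 hlb.le
  have key := one_add_mul_one_add_div_one_add_mul_le (t := a ^ 2) hx hy
    (one_le_pow₀ hb : 1 ≤ b ^ 2) (by rw [← mul_pow]; exact one_le_pow₀ hab)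
  rw [← mul_div_assoc, ← mul_div_assoc] at key
  calc (1/2) * Real.log (1 + P1A/lb) + (1/2) * Real.log (1 + (P2/lb) / (1 + a^2 * P1A/lb))
      = (1/2) * Real.log ((1 + P1A/lb) * (1 + (P2/lb) / (1 + a^2 * P1A/lb))) := by
        rw [Real.log_mul (by positivity) (by positivity)]
        ring
    _ ≤ (1/2) * Real.log (1 + P1A/lb + b^2 * P2/lb) := by
        exact mul_le_mul_of_nonneg_left (Real.log_le_log (by positivity) key) (by norm_num)

theorem stmt_7 (a b lb P1A P2 : ℝ) (hlb : 0 < lb) (hA : 0 ≤ P1A)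
    (h2 : 0 ≤ P2) (ha : 0 < a) (ha1 : a ≤ 1) (hb : 1 ≤ b) (hab : 1 ≤ a * b) :
    (1/2) * Real.log (1 + P1A/lb) +
      (1/2) * Real.log (1 + (P2/lb) / (1 + a^2 * P1A/lb)) ≤
    (1/2) * Real.log (1 + P1A/lb + b^2 * P2/lb) :=
  stmt_7_general a b lb P1A P2 hlb hA h2 hb hab
end

section
/- For all real numbers a, b, λ̄, P1A, P1C, P2 with 0 < λ̄, 0 ≤ P1A, 0 ≤ P1C, 0 ≤ P2, 0 < a ≤ 1, b ≥ 1, and a·b ≥ 1, we have log(1 + (P2/λ̄)/(1 + a²·P1A/λ̄)) + (1/2)·log(1 + P1A/λ̄) + (1/2)·log(1 + (a²·P1C/λ̄)/(1 + a²·P1A/λ̄ + P2/λ̄)) ≤ (1/2)·log(1 + P1A/λ̄ + b²·P2/λ̄) + (1/2)·log(1 + P1C/λ̄ + b²·P2/λ̄). -/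
/-!
Normalising by `λ̄` (`x = P1A/λ̄`, `y = P1C/λ̄`, `z = P2/λ̄`), twice the left-hand side equals
`[log (1+a²x+z) + log (1+x) - log (1+a²x)] + [log (1+a²x+z+a²y) - log (1+a²x)]`.
Each bracket is bounded by one of the right-hand terms through a polynomial inequality whose
slack is a sum of nonnegative monomials with coefficients `1 - a²`, `b² - 1` and `a²b² - 1`.
-/

open Real

theorem log_one_add_div_eq {u v : ℝ} (hu : 0 ≤ u) (hv : 0 < v) :
    log (1 + u / v) = log (v + u) - log v := by
  rw [← log_div (by positivity) hv.ne', add_div, div_self hv.ne']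

section MixedInterference

variable {a b x y z : ℝ}

theorem one_le_sq_right_of_one_le_sq_mul (ha : a ^ 2 ≤ 1) (hab : 1 ≤ a ^ 2 * b ^ 2) :
    1 ≤ b ^ 2 := by
  nlinarith [sq_nonneg b]

theorem overflow_factor_le (hx : 0 ≤ x) (hz : 0 ≤ z) (hb : 1 ≤ b ^ 2)
    (hab : 1 ≤ a ^ 2 * b ^ 2) :
    (1 + a ^ 2 * x + z) * (1 + x) ≤ (1 + x + b ^ 2 * z) * (1 + a ^ 2 * x) := by
  nlinarith [mul_nonneg hz (sub_nonneg.mpr hb), mul_nonneg (mul_nonneg hx hz) (sub_nonneg.mpr hab)]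

theorem cross_factor_le (hx : 0 ≤ x) (hy : 0 ≤ y) (hz : 0 ≤ z) (ha : a ^ 2 ≤ 1)
    (hb : 1 ≤ b ^ 2) :
    1 + a ^ 2 * x + z + a ^ 2 * y ≤ (1 + y + b ^ 2 * z) * (1 + a ^ 2 * x) := by
  have hab : 0 ≤ a ^ 2 * b ^ 2 := by positivity
  nlinarith [mul_nonneg hy (sub_nonneg.mpr ha), mul_nonneg (mul_nonneg (sq_nonneg a) hx) hy,
    mul_nonneg hz (sub_nonneg.mpr hb), mul_nonneg (mul_nonneg hx hz) hab]

theorem rate_sum_le_of_normalized (hx : 0 ≤ x) (hy : 0 ≤ y) (hz : 0 ≤ z) (ha : a ^ 2 ≤ 1)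
    (hab : 1 ≤ a ^ 2 * b ^ 2) :
    log (1 + z / (1 + a ^ 2 * x)) + (1 / 2) * log (1 + x) +
        (1 / 2) * log (1 + a ^ 2 * y / (1 + a ^ 2 * x + z)) ≤
      (1 / 2) * log (1 + x + b ^ 2 * z) + (1 / 2) * log (1 + y + b ^ 2 * z) := by
  have hb := one_le_sq_right_of_one_le_sq_mul ha hab
  have hax : 0 ≤ a ^ 2 * x := by positivity
  have hay : 0 ≤ a ^ 2 * y := by positivity
  have hbz : 0 ≤ b ^ 2 * z := by positivity
  rw [log_one_add_div_eq hz (by positivity), log_one_add_div_eq hay (by positivity)]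
  have overflow : log (1 + a ^ 2 * x + z) + log (1 + x) ≤
      log (1 + x + b ^ 2 * z) + log (1 + a ^ 2 * x) := by
    rw [← log_mul (by positivity) (by positivity), ← log_mul (by positivity) (by positivity)]
    exact log_le_log (by positivity) (overflow_factor_le hx hz hb hab)
  have cross : log (1 + a ^ 2 * x + z + a ^ 2 * y) ≤
      log (1 + y + b ^ 2 * z) + log (1 + a ^ 2 * x) := by
    rw [← log_mul (by positivity) (by positivity)]
    exact log_le_log (by positivity) (cross_factor_le hx hy hz ha hb)
  linarith

end MixedInterference

theorem stmt_8_general (a b lb P1A P1C P2 : ℝ) (hlb : 0 < lb) (hA : 0 ≤ P1A)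
    (hC : 0 ≤ P1C) (h2 : 0 ≤ P2) (ha : 0 < a) (ha1 : a ≤ 1)
    (hab : 1 ≤ a * b) :
    Real.log (1 + (P2/lb) / (1 + a^2 * P1A/lb)) +
      (1/2) * Real.log (1 + P1A/lb) +
      (1/2) * Real.log (1 + (a^2 * P1C/lb) / (1 + a^2 * P1A/lb + P2/lb)) ≤
    (1/2) * Real.log (1 + P1A/lb + b^2 * P2/lb) +
      (1/2) * Real.log (1 + P1C/lb + b^2 * P2/lb) := by
  have ha2 : a ^ 2 ≤ 1 := pow_le_one₀ ha.le ha1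
  have hab2 : 1 ≤ a ^ 2 * b ^ 2 := by rw [← mul_pow]; exact one_le_pow₀ hab
  rw [mul_div_assoc (a ^ 2) P1A, mul_div_assoc (a ^ 2) P1C, mul_div_assoc (b ^ 2) P2]
  exact rate_sum_le_of_normalized (div_nonneg hA hlb.le) (div_nonneg hC hlb.le)
    (div_nonneg h2 hlb.le) ha2 hab2

theorem stmt_8 (a b lb P1A P1C P2 : ℝ) (hlb : 0 < lb) (hA : 0 ≤ P1A)
    (hC : 0 ≤ P1C) (h2 : 0 ≤ P2) (ha : 0 < a) (ha1 : a ≤ 1) (hb : 1 ≤ b)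
    (hab : 1 ≤ a * b) :
    Real.log (1 + (P2/lb) / (1 + a^2 * P1A/lb)) +
      (1/2) * Real.log (1 + P1A/lb) +
      (1/2) * Real.log (1 + (a^2 * P1C/lb) / (1 + a^2 * P1A/lb + P2/lb)) ≤
    (1/2) * Real.log (1 + P1A/lb + b^2 * P2/lb) +
      (1/2) * Real.log (1 + P1C/lb + b^2 * P2/lb) :=
  stmt_8_general a b lb P1A P1C P2 hlb hA hC h2 ha ha1 hab
end

section
/- For all real numbers a, b, λ̄, P1A, P1C, P2 with 0 < λ̄, 0 ≤ P1A, 0 ≤ P1C, 0 ≤ P2, 0 < a ≤ 1, b ≥ 1, and a·b ≥ 1, we have (1/2)·log(1 + (a²·P1C/λ̄)/(1 + a²·P1A/λ̄ + P2/λ̄)) + (1/2)·log(1 + (P2/λ̄)/(1 + a²·P1A/λ̄)) ≤ (1/2)·log(1 + P1C/λ̄ + b²·P2/λ̄). -/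
/-!
With `x, y, z` the normalized powers `P1A/lb, P2/lb, P1C/lb`, the two rates on the left telescope
(chain rule): their sum is `½ log ((1 + a²x + y + a²z) / (1 + a²x))`. Clearing the denominator, the
claim becomes `(1 - a²) z + (b² - 1) y + a²xz + a²b²xy ≥ 0`, true term by term since `a² ≤ 1 ≤ b²`.
-/

open Real

theorem log_one_add_div_add_log_one_add_div {v y c : ℝ} (hv : 0 < v) (hy : 0 ≤ y)
    (hc : 0 ≤ c) :
    log (1 + c / (v + y)) + log (1 + y / v) = log ((v + y + c) / v) := by
  rw [← log_mul (by positivity) (by positivity)]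
  congr 1
  field_simp

theorem one_add_mul_add_add_mul_le_mul {s t x y z : ℝ} (hx : 0 ≤ x) (hy : 0 ≤ y) (hz : 0 ≤ z)
    (hs : 0 ≤ s) (hs1 : s ≤ 1) (ht : 1 ≤ t) :
    1 + s * x + y + s * z ≤ (1 + s * x) * (1 + z + t * y) := by
  have hsxz : 0 ≤ s * x * z := by positivity
  have hsxty : 0 ≤ s * x * (t * y) := mul_nonneg (by positivity) (by nlinarith)
  nlinarith [mul_nonneg (sub_nonneg.2 hs1) hz, mul_nonneg (sub_nonneg.2 ht) hy]

theorem log_one_add_div_add_log_one_add_div_le {s t x y z : ℝ} (hx : 0 ≤ x) (hy : 0 ≤ y)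
    (hz : 0 ≤ z) (hs : 0 ≤ s) (hs1 : s ≤ 1) (ht : 1 ≤ t) :
    log (1 + s * z / (1 + s * x + y)) + log (1 + y / (1 + s * x)) ≤ log (1 + z + t * y) := by
  have hv : 0 < 1 + s * x := by positivity
  rw [log_one_add_div_add_log_one_add_div hv hy (by positivity)]
  gcongr
  rw [div_le_iff₀ hv]
  linarith [one_add_mul_add_add_mul_le_mul hx hy hz hs hs1 ht]

theorem stmt_9_general (a b lb P1A P1C P2 : ℝ) (hlb : 0 < lb) (hA : 0 ≤ P1A)
    (hC : 0 ≤ P1C) (h2 : 0 ≤ P2) (ha : 0 < a) (ha1 : a ≤ 1) (hb : 1 ≤ b) :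
    (1/2) * Real.log (1 + (a^2 * P1C/lb) / (1 + a^2 * P1A/lb + P2/lb)) +
      (1/2) * Real.log (1 + (P2/lb) / (1 + a^2 * P1A/lb)) ≤
    (1/2) * Real.log (1 + P1C/lb + b^2 * P2/lb) := by
  have hs1 : a ^ 2 ≤ 1 := pow_le_one₀ ha.le ha1
  have ht : 1 ≤ b ^ 2 := one_le_pow₀ hb
  have key := log_one_add_div_add_log_one_add_div_le (div_nonneg hA hlb.le)
    (div_nonneg h2 hlb.le) (div_nonneg hC hlb.le) (sq_nonneg a) hs1 ht
  simp only [← mul_div_assoc] at key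
  linarith

theorem stmt_9 (a b lb P1A P1C P2 : ℝ) (hlb : 0 < lb) (hA : 0 ≤ P1A)
    (hC : 0 ≤ P1C) (h2 : 0 ≤ P2) (ha : 0 < a) (ha1 : a ≤ 1) (hb : 1 ≤ b)
    (hab : 1 ≤ a * b) :
    (1/2) * Real.log (1 + (a^2 * P1C/lb) / (1 + a^2 * P1A/lb + P2/lb)) +
      (1/2) * Real.log (1 + (P2/lb) / (1 + a^2 * P1A/lb)) ≤
    (1/2) * Real.log (1 + P1C/lb + b^2 * P2/lb) :=
  stmt_9_general a b lb P1A P1C P2 hlb hA hC h2 ha ha1 hb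
end

section
/- For all real numbers a, λ̄, P1A, P1C, P2 with 0 < λ̄, 0 ≤ P1A, 0 ≤ P1C, 0 ≤ P2, and 0 < a ≤ 1, we have (a²·P1C/(λ̄ + a²·P1A + P2))·(1 + P1A/λ̄) + (P2/(λ̄ + a²·P1A))·(1 + P1A/λ̄) + (P2/(λ̄ + a²·P1A))·(1 + P1A/λ̄)·(a²·P1C/(λ̄ + a²·P1A + P2)) ≤ P1C/λ̄ + b²·P2/λ̄ for every real b with b ≥ 1 and a·b ≥ 1. -/
/-! Write `x = a²P1C/(lb + a²P1A + P2)`, `y = P2/(lb + a²P1A)` and `c = 1 + P1A/lb`; the left side is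
`x·c·(1 + y) + y·c`. In the first term `1 + y` cancels the denominator of `x`, leaving
`a²P1C(lb + P1A)/(lb(lb + a²P1A)) ≤ P1C/lb` because `a² ≤ 1`; the second term is at most `b²P2/lb`
because `lb + P1A ≤ b²(lb + a²P1A)` when `b² ≥ 1` and `a²b² ≥ 1`. -/

lemma mul_one_add_div_mul_one_add_div_le {lb P1A P1C P2 s : ℝ} (hlb : 0 < lb) (hA : 0 ≤ P1A)
    (hC : 0 ≤ P1C) (h2 : 0 ≤ P2) (hs0 : 0 ≤ s) (hs1 : s ≤ 1) :
    s * P1C / (lb + s * P1A + P2) * (1 + P1A / lb) * (1 + P2 / (lb + s * P1A)) ≤ P1C / lb := by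
  have hD : 0 < lb + s * P1A := by positivity
  have hcancel : s * P1C / (lb + s * P1A + P2) * (1 + P2 / (lb + s * P1A)) =
      s * P1C / (lb + s * P1A) := by
    rw [one_add_div hD.ne']
    field_simp
  calc s * P1C / (lb + s * P1A + P2) * (1 + P1A / lb) * (1 + P2 / (lb + s * P1A))
      = P1C * (s * (lb + P1A) / (lb + s * P1A)) / lb := by
        rw [mul_right_comm, hcancel, one_add_div hlb.ne']
        field_simp
    _ ≤ P1C * 1 / lb := by
        gcongr
        rw [div_le_one hD]
        nlinarith
    _ = P1C / lb := by rw [mul_one]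

lemma div_mul_one_add_div_le {lb P1A P2 s t : ℝ} (hlb : 0 < lb) (hA : 0 ≤ P1A) (h2 : 0 ≤ P2)
    (hs0 : 0 ≤ s) (ht : 1 ≤ t) (hst : 1 ≤ s * t) :
    P2 / (lb + s * P1A) * (1 + P1A / lb) ≤ t * P2 / lb := by
  have hD : 0 < lb + s * P1A := by positivity
  calc P2 / (lb + s * P1A) * (1 + P1A / lb) = P2 * ((lb + P1A) / (lb + s * P1A)) / lb := by
        rw [one_add_div hlb.ne']
        field_simp
    _ ≤ P2 * t / lb := by
        gcongr
        rw [div_le_iff₀ hD]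
        nlinarith
    _ = t * P2 / lb := by rw [mul_comm]

theorem stmt_10_general (a lb P1A P1C P2 : ℝ) (hlb : 0 < lb) (hA : 0 ≤ P1A)
    (hC : 0 ≤ P1C) (h2 : 0 ≤ P2) (ha1 : a ≤ 1) :
    ∀ b : ℝ, 1 ≤ b → 1 ≤ a * b →
      (a^2 * P1C / (lb + a^2 * P1A + P2)) * (1 + P1A/lb) +
        (P2 / (lb + a^2 * P1A)) * (1 + P1A/lb) +
        (P2 / (lb + a^2 * P1A)) * (1 + P1A/lb) *
          (a^2 * P1C / (lb + a^2 * P1A + P2)) ≤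
      P1C/lb + b^2 * P2/lb := by
  intro b hb hab
  have ha : 0 < a := pos_of_mul_pos_left (by linarith) (by linarith)
  have ha2 : a ^ 2 ≤ 1 := pow_le_one₀ ha.le ha1
  have hb2 : 1 ≤ b ^ 2 := one_le_pow₀ hb
  have hab2 : 1 ≤ a ^ 2 * b ^ 2 := by rw [← mul_pow]; exact one_le_pow₀ hab
  have h14 := mul_one_add_div_mul_one_add_div_le hlb hA hC h2 (sq_nonneg a) ha2
  have h15 := div_mul_one_add_div_le hlb hA h2 (sq_nonneg a) hb2 hab2
  linear_combination h14 + h15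

theorem stmt_10 (a lb P1A P1C P2 : ℝ) (hlb : 0 < lb) (hA : 0 ≤ P1A)
    (hC : 0 ≤ P1C) (h2 : 0 ≤ P2) (ha : 0 < a) (ha1 : a ≤ 1) :
    ∀ b : ℝ, 1 ≤ b → 1 ≤ a * b →
      (a^2 * P1C / (lb + a^2 * P1A + P2)) * (1 + P1A/lb) +
        (P2 / (lb + a^2 * P1A)) * (1 + P1A/lb) +
        (P2 / (lb + a^2 * P1A)) * (1 + P1A/lb) *
          (a^2 * P1C / (lb + a^2 * P1A + P2)) ≤
      P1C/lb + b^2 * P2/lb :=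
  stmt_10_general a lb P1A P1C P2 hlb hA hC h2 ha1
end
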